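/- With the setup of the preceding node-addition theorem (G has clique {k+1,...,n}, rates ν realize θ on G; G~ adds vertex n+1 adjacent to {k+1,...,n}; ν~ defined as there), the normalizing constants satisfy Z~_{n+1} = Z_n · (1 − ∑_{j=k+1}^n θ_j)/(1 − θ_{n+1} − ∑_{j=k+1}^n θ_j) = Z_n (1 + ν~_{n+1}). -/

import Mathlib

open scoped Classical
open Finset

/-- Weight of a 0-1 configuration `z` with back-off rates `ν`. -/
noncomputable def hcWeight {n : ℕ} (ν : Fin n → ℝ) (z : Fin n → Bool) : ℝ :=
  ∏ i, if z i then ν i else 1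

/-- `z` is an independent-set indicator vector for adjacency `A`. -/
def hcIndep {n : ℕ} (A : Fin n → Fin n → Prop) (z : Fin n → Bool) : Prop :=
  ∀ i j, A i j → ¬(z i = true ∧ z j = true)

/-- Normalizing constant of the hard-core model. -/
noncomputable def hcZ (n : ℕ) (A : Fin n → Fin n → Prop) (ν : Fin n → ℝ) : ℝ :=
  ∑ z : Fin n → Bool, if hcIndep A z then hcWeight ν z else 0

/-- Marginal activity probability of node `i` in the hard-core model. -/
noncomputable def hcMarginal (n : ℕ) (A : Fin n → Fin n → Prop) (ν : Fin n → ℝ)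
    (i : Fin n) : ℝ :=
  (∑ z : Fin n → Bool, if hcIndep A z ∧ z i = true then hcWeight ν z else 0) / hcZ n A ν

/-!
Split the configurations on `G'` according to the new vertex. If it is empty, what remains is
the partition function of `G` at the rescaled rates; as `{k+1, …, n}` is a clique, at most one
of its vertices is occupied, so this is `Z_∅ + r ∑ⱼ Zⱼ`, where `Zⱼ = θⱼ Zₙ` collects the
configurations occupying `j`, `Z_∅ = (1 - ∑θ) Zₙ` those avoiding the clique, and
`r = (1 - ∑θ) / (1 - t - ∑θ)`. If it is occupied, the clique is empty and the contribution is
`ν'ₙ₊₁ Z_∅`. Altogether `Z' = Zₙ (1 - ∑θ) (1 + (∑θ + t) / (1 - t - ∑θ))`.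
-/

section HardCore

variable {n : ℕ}

noncomputable def hcZAvoiding (A : Fin n → Fin n → Prop) (ν : Fin n → ℝ) (s : Finset (Fin n)) :
    ℝ :=
  ∑ z : Fin n → Bool, if hcIndep A z ∧ ∀ j ∈ s, z j = false then hcWeight ν z else 0

noncomputable def hcZOccupied (A : Fin n → Fin n → Prop) (ν : Fin n → ℝ) (i : Fin n) : ℝ :=
  ∑ z : Fin n → Bool, if hcIndep A z ∧ z i = true then hcWeight ν z else 0

lemma hcWeight_nonneg {ν : Fin n → ℝ} (hν : ∀ i, 0 ≤ ν i) (z : Fin n → Bool) :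
    0 ≤ hcWeight ν z :=
  prod_nonneg fun i _ => by split_ifs <;> simp [hν i]

lemma hcWeight_congr {μ ν : Fin n → ℝ} {z : Fin n → Bool} (h : ∀ i, z i = true → μ i = ν i) :
    hcWeight μ z = hcWeight ν z :=
  prod_congr rfl fun i _ => by cases hz : z i <;> simp [h i, hz]

lemma hcWeight_eq_mul_of_occupied {μ ν : Fin n → ℝ} {z : Fin n → Bool} {j : Fin n} {r : ℝ}
    (hj : μ j = r * ν j) (hzj : z j = true) (h : ∀ i ≠ j, z i = true → μ i = ν i) :
    hcWeight μ z = r * hcWeight ν z := by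
  have hrest : (∏ i ∈ {j}ᶜ, if z i then μ i else 1) = ∏ i ∈ {j}ᶜ, if z i then ν i else 1 :=
    prod_congr rfl fun i hi => by cases hz : z i <;> simp_all
  unfold hcWeight
  rw [Fintype.prod_eq_mul_prod_compl j, Fintype.prod_eq_mul_prod_compl j, hrest]
  simp [hzj, hj, mul_assoc]

lemma hcWeight_snoc (ν : Fin (n + 1) → ℝ) (z : Fin n → Bool) (b : Bool) :
    hcWeight ν (Fin.snoc z b : Fin (n + 1) → Bool) =
      hcWeight (ν ∘ Fin.castSucc) z * (if b then ν (Fin.last n) else 1) := by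
  simp [hcWeight, Fin.prod_univ_castSucc]

lemma one_le_hcZ (A : Fin n → Fin n → Prop) {ν : Fin n → ℝ} (hν : ∀ i, 0 ≤ ν i) :
    1 ≤ hcZ n A ν := by
  have hempty : hcIndep A (fun _ => false) := fun _ _ _ h => by simp at h
  calc (1 : ℝ) = if hcIndep A (fun _ => false) then hcWeight ν (fun _ => false) else 0 := by
        simp [hempty, hcWeight]
    _ ≤ hcZ n A ν :=
        single_le_sum (f := fun z => if hcIndep A z then hcWeight ν z else 0)
          (fun z _ => by split_ifs <;> simp [hcWeight_nonneg hν]) (mem_univ _)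

lemma hcZOccupied_eq_hcMarginal_mul (A : Fin n → Fin n → Prop) (ν : Fin n → ℝ) (i : Fin n)
    (hZ : hcZ n A ν ≠ 0) : hcZOccupied A ν i = hcMarginal n A ν i * hcZ n A ν :=
  (div_mul_cancel₀ _ hZ).symm

section Clique

variable {A : Fin n → Fin n → Prop} {s : Finset (Fin n)}

lemma ite_hcIndep_eq_avoiding_add_sum_occupied (hs : (s : Set (Fin n)).Pairwise A) (x : ℝ)
    (z : Fin n → Bool) :
    (if hcIndep A z then x else 0) =
      (if hcIndep A z ∧ ∀ j ∈ s, z j = false then x else 0) +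
        ∑ j ∈ s, if hcIndep A z ∧ z j = true then x else 0 := by
  by_cases hz : hcIndep A z
  swap
  · simp [hz]
  by_cases havoid : ∀ j ∈ s, z j = false
  · simp +contextual [hz, havoid]
  simp only [not_forall, Bool.not_eq_false] at havoid
  obtain ⟨j, hj, hzj⟩ := havoid
  rw [sum_eq_single_of_mem j hj fun i hi hij => if_neg fun ⟨_, hzi⟩ =>
    hz i j (hs hi hj hij) ⟨hzi, hzj⟩]
  have hoccupied : ¬∀ i ∈ s, z i = false := fun h => by simp [h j hj] at hzj
  simp [hz, hzj, hoccupied]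

lemma hcZ_eq_hcZAvoiding_add_sum_hcZOccupied (hs : (s : Set (Fin n)).Pairwise A)
    (ν : Fin n → ℝ) : hcZ n A ν = hcZAvoiding A ν s + ∑ j ∈ s, hcZOccupied A ν j := by
  simp only [hcZ, hcZAvoiding, hcZOccupied]
  rw [sum_comm, ← sum_add_distrib]
  exact sum_congr rfl fun z _ => ite_hcIndep_eq_avoiding_add_sum_occupied hs _ z

lemma hcZAvoiding_eq_hcZ_mul_one_sub_sum_hcMarginal (hs : (s : Set (Fin n)).Pairwise A)
    {ν : Fin n → ℝ} (hZ : hcZ n A ν ≠ 0) :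
    hcZAvoiding A ν s = hcZ n A ν * (1 - ∑ j ∈ s, hcMarginal n A ν j) := by
  have hsplit := hcZ_eq_hcZAvoiding_add_sum_hcZOccupied hs ν
  simp_rw [hcZOccupied_eq_hcMarginal_mul A ν _ hZ, ← sum_mul] at hsplit
  linear_combination -hsplit

variable {μ ν : Fin n → ℝ} {r : ℝ}

lemma hcZAvoiding_congr (h : ∀ i ∉ s, μ i = ν i) : hcZAvoiding A μ s = hcZAvoiding A ν s :=
  sum_congr rfl fun z _ => by
    split_ifs with hz
    · exact hcWeight_congr fun i hzi => h i fun his => by simp [hz.2 i his] at hzi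
    · rfl

lemma hcZOccupied_of_rescale (hs : (s : Set (Fin n)).Pairwise A) {j : Fin n} (hj : j ∈ s)
    (hout : ∀ i ∉ s, μ i = ν i) (hin : ∀ i ∈ s, μ i = r * ν i) :
    hcZOccupied A μ j = r * hcZOccupied A ν j := by
  rw [hcZOccupied, hcZOccupied, mul_sum]
  refine sum_congr rfl fun z _ => ?_
  split_ifs with hz
  · exact hcWeight_eq_mul_of_occupied (hin j hj) hz.2 fun i hij hzi =>
      hout i fun his => hz.1 i j (hs his hj hij) ⟨hzi, hz.2⟩
  · simp

lemma hcZ_of_rescale (hs : (s : Set (Fin n)).Pairwise A) (hout : ∀ i ∉ s, μ i = ν i)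
    (hin : ∀ i ∈ s, μ i = r * ν i) :
    hcZ n A μ = hcZAvoiding A ν s + r * ∑ j ∈ s, hcZOccupied A ν j := by
  rw [hcZ_eq_hcZAvoiding_add_sum_hcZOccupied hs μ, hcZAvoiding_congr hout, mul_sum]
  exact congrArg _ (sum_congr rfl fun j hj => hcZOccupied_of_rescale hs hj hout hin)

end Clique

section AddVertex

variable {A : Fin n → Fin n → Prop} {s : Finset (Fin n)}

lemma hcIndep_snoc_false {A' : Fin (n + 1) → Fin (n + 1) → Prop}
    (hA : ∀ i j, A' i.castSucc j.castSucc ↔ A i j) (z : Fin n → Bool) :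
    hcIndep A' (Fin.snoc z false : Fin (n + 1) → Bool) ↔ hcIndep A z := by
  constructor
  · intro h i j hij
    simpa using h _ _ ((hA i j).2 hij)
  · intro h i j hij
    cases i using Fin.lastCases with
    | last => simp
    | cast i =>
      cases j using Fin.lastCases with
      | last => simp
      | cast j => simpa using h _ _ ((hA i j).1 hij)

lemma hcIndep_snoc_true {G' : SimpleGraph (Fin (n + 1))}
    (hA : ∀ i j, G'.Adj i.castSucc j.castSucc ↔ A i j)
    (hs : ∀ i, G'.Adj (Fin.last n) i.castSucc ↔ i ∈ s) (z : Fin n → Bool) :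
    hcIndep G'.Adj (Fin.snoc z true : Fin (n + 1) → Bool) ↔
      hcIndep A z ∧ ∀ j ∈ s, z j = false := by
  constructor
  · intro h
    refine ⟨fun i j hij => by simpa using h _ _ ((hA i j).2 hij), fun j hj => ?_⟩
    simpa using h _ _ ((hs j).2 hj)
  · rintro ⟨hz, havoid⟩ i j hij
    cases i using Fin.lastCases with
    | last =>
      cases j using Fin.lastCases with
      | last => exact absurd hij (G'.loopless.irrefl _)
      | cast j => simp [havoid j ((hs j).1 hij)]
    | cast i =>
      cases j using Fin.lastCases with
      | last => simp [havoid i ((hs i).1 hij.symm)]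
      | cast j => simpa using hz _ _ ((hA i j).1 hij)

lemma hcZ_succ {G' : SimpleGraph (Fin (n + 1))}
    (hA : ∀ i j, G'.Adj i.castSucc j.castSucc ↔ A i j)
    (hs : ∀ i, G'.Adj (Fin.last n) i.castSucc ↔ i ∈ s) (ν' : Fin (n + 1) → ℝ) :
    hcZ (n + 1) G'.Adj ν' =
      hcZ n A (ν' ∘ Fin.castSucc) + ν' (Fin.last n) * hcZAvoiding A (ν' ∘ Fin.castSucc) s := by
  rw [hcZ, ← (Fin.snocEquiv fun _ => Bool).sum_comp, Fintype.sum_prod_type, Fintype.sum_bool,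
    add_comm, hcZ, hcZAvoiding, mul_sum]
  congr 1 <;> refine sum_congr rfl fun z _ => ?_
  · simp [Fin.snocEquiv, hcWeight_snoc, hcIndep_snoc_false hA]
  · simp [Fin.snocEquiv, hcWeight_snoc, hcIndep_snoc_true hA hs, mul_comm]

end AddVertex

end HardCore

theorem stmt13_general (n k : ℕ) (G : SimpleGraph (Fin n))
    (hclique : ∀ i j : Fin n, k ≤ i.val → k ≤ j.val → i ≠ j → G.Adj i j)
    (ν θ : Fin n → ℝ) (hν : ∀ i, 0 < ν i)
    (hmarg : ∀ i, hcMarginal n G.Adj ν i = θ i)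
    (t : ℝ)
    (ht1 : t < 1 - ∑ j ∈ Finset.univ.filter (fun j : Fin n => k ≤ j.val), θ j)
    (G' : SimpleGraph (Fin (n + 1)))
    (hG'1 : ∀ i j : Fin n, G'.Adj i.castSucc j.castSucc ↔ G.Adj i j)
    (hG'2 : ∀ i : Fin n, G'.Adj (Fin.last n) i.castSucc ↔ k ≤ i.val)
    (ν' : Fin (n + 1) → ℝ)
    (hν'1 : ∀ i : Fin n, i.val < k → ν' i.castSucc = ν i)
    (hν'2 : ∀ i : Fin n, k ≤ i.val → ν' i.castSucc =
      ν i * (1 - ∑ j ∈ Finset.univ.filter (fun j : Fin n => k ≤ j.val), θ j) /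
        (1 - t - ∑ j ∈ Finset.univ.filter (fun j : Fin n => k ≤ j.val), θ j))
    (hν'3 : ν' (Fin.last n) =
      t / (1 - t - ∑ j ∈ Finset.univ.filter (fun j : Fin n => k ≤ j.val), θ j)) :
    hcZ (n + 1) G'.Adj ν' =
      hcZ n G.Adj ν *
        (1 - ∑ j ∈ Finset.univ.filter (fun j : Fin n => k ≤ j.val), θ j) /
          (1 - t - ∑ j ∈ Finset.univ.filter (fun j : Fin n => k ≤ j.val), θ j) ∧
    hcZ (n + 1) G'.Adj ν' = hcZ n G.Adj ν * (1 + ν' (Fin.last n)) := by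
  set s := Finset.univ.filter (fun j : Fin n => k ≤ j.val)
  set S := ∑ j ∈ s, θ j
  have hD : 1 - t - S ≠ 0 := by linarith
  have hs : (s : Set (Fin n)).Pairwise G.Adj := fun i hi j hj hij =>
    hclique i j (by simpa [s] using hi) (by simpa [s] using hj) hij
  have hZ : hcZ n G.Adj ν ≠ 0 :=
    (zero_lt_one.trans_le (one_le_hcZ G.Adj fun i => (hν i).le)).ne'
  have hoccupied : ∑ j ∈ s, hcZOccupied G.Adj ν j = hcZ n G.Adj ν * S := by
    simp_rw [S, mul_sum, hcZOccupied_eq_hcMarginal_mul _ _ _ hZ, hmarg, mul_comm]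
  have havoid : hcZAvoiding G.Adj ν s = hcZ n G.Adj ν * (1 - S) := by
    simp_rw [S, hcZAvoiding_eq_hcZ_mul_one_sub_sum_hcMarginal hs hZ, hmarg]
  have hout : ∀ i ∉ s, (ν' ∘ Fin.castSucc) i = ν i := fun i hi =>
    hν'1 i (by simpa [s] using hi)
  have hin : ∀ i ∈ s, (ν' ∘ Fin.castSucc) i = (1 - S) / (1 - t - S) * ν i := fun i hi => by
    simp only [Function.comp_apply, hν'2 i (by simpa [s] using hi)]
    ring
  have hZ' : hcZ (n + 1) G'.Adj ν' = hcZ n G.Adj ν * (1 - S) / (1 - t - S) := by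
    rw [hcZ_succ hG'1 (s := s) (by simpa [s] using hG'2), hcZ_of_rescale hs hout hin,
      hcZAvoiding_congr hout, havoid, hoccupied, hν'3]
    field_simp
    ring
  refine ⟨hZ', ?_⟩
  rw [hZ', hν'3]
  field_simp
  ring

/-- with the setup of the node-addition theorem, the normalizing
constants satisfy `Z'_{n+1} = Z_n (1 − ∑θ_clique)/(1 − t − ∑θ_clique) = Z_n (1 + ν'_{n+1})`. -/
theorem stmt13 (n k : ℕ) (hk : k ≤ n) (G : SimpleGraph (Fin n))
    (hclique : ∀ i j : Fin n, k ≤ i.val → k ≤ j.val → i ≠ j → G.Adj i j)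
    (ν θ : Fin n → ℝ) (hν : ∀ i, 0 < ν i)
    (hmarg : ∀ i, hcMarginal n G.Adj ν i = θ i)
    (hS : ∑ j ∈ Finset.univ.filter (fun j : Fin n => k ≤ j.val), θ j < 1)
    (t : ℝ) (ht0 : 0 < t)
    (ht1 : t < 1 - ∑ j ∈ Finset.univ.filter (fun j : Fin n => k ≤ j.val), θ j)
    (G' : SimpleGraph (Fin (n + 1)))
    (hG'1 : ∀ i j : Fin n, G'.Adj i.castSucc j.castSucc ↔ G.Adj i j)
    (hG'2 : ∀ i : Fin n, G'.Adj (Fin.last n) i.castSucc ↔ k ≤ i.val)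
    (ν' : Fin (n + 1) → ℝ)
    (hν'1 : ∀ i : Fin n, i.val < k → ν' i.castSucc = ν i)
    (hν'2 : ∀ i : Fin n, k ≤ i.val → ν' i.castSucc =
      ν i * (1 - ∑ j ∈ Finset.univ.filter (fun j : Fin n => k ≤ j.val), θ j) /
        (1 - t - ∑ j ∈ Finset.univ.filter (fun j : Fin n => k ≤ j.val), θ j))
    (hν'3 : ν' (Fin.last n) =
      t / (1 - t - ∑ j ∈ Finset.univ.filter (fun j : Fin n => k ≤ j.val), θ j)) :
    hcZ (n + 1) G'.Adj ν' =
      hcZ n G.Adj ν *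
        (1 - ∑ j ∈ Finset.univ.filter (fun j : Fin n => k ≤ j.val), θ j) /
          (1 - t - ∑ j ∈ Finset.univ.filter (fun j : Fin n => k ≤ j.val), θ j) ∧
    hcZ (n + 1) G'.Adj ν' = hcZ n G.Adj ν * (1 + ν' (Fin.last n)) :=
  stmt13_general n k G hclique ν θ hν hmarg t ht1 G' hG'1 hG'2 ν' hν'1 hν'2 hν'3
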